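/- arXiv:1309.5885 — 3 statements merged into one kernel-verified Lean document; each statement's English description precedes it below -/
import Mathlib

section
/- Let $\hat{S}$ be a $\tau$-nice sampling on $[n]$ with $n\ge 2$. Then for any nonempty $J\subseteq[n]$, $\max_{1\le k\le n}\mathbf{E}\left[|J\cap\hat{S}|\cdot\chi_{(k\in\hat{S})}\right] = \frac{\tau}{n}\left(1+\frac{(|J|-1)(\tau-1)}{n-1}\right)$, where $\chi_{(k\in\hat{S})}$ equals $1$ if $k\in\hat{S}$ and $0$ otherwise. -/
/-!
Writing `#(J ∩ S) = ∑ j ∈ J, [j ∈ S]` and exchanging the sums, the expectation for `k` is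
`∑ j ∈ J, P(j ∈ S ∧ k ∈ S)`. A fixed `s`-set lies in a fraction `C(τ, s) / C(n, s)` of the
`τ`-subsets, so `P(k ∈ S) = τ / n` and `P(j ∈ S ∧ k ∈ S) = τ(τ - 1) / (n(n - 1))` for `j ≠ k`.
The latter is at most the former, so the maximum is attained at any `k ∈ J`.
-/

open Finset

section
variable {α : Type*} [DecidableEq α]

lemma card_filter_subset_powersetCard_mul_choose {U A : Finset α} (hAU : A ⊆ U) (τ : ℕ) :
    #{S ∈ powersetCard τ U | A ⊆ S} * (#U).choose #A = (#U).choose τ * τ.choose #A := by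
  by_cases hAτ : #A ≤ τ
  · have hcount : #{S ∈ powersetCard τ U | A ⊆ S} = (#U - #A).choose (τ - #A) := by
      rw [← card_sdiff_of_subset hAU, ← card_powersetCard]
      refine card_nbij' (· \ A) (· ∪ A) ?_ ?_ ?_ ?_
      · intro S hS
        simp only [mem_coe, mem_filter, mem_powersetCard] at hS ⊢
        exact ⟨sdiff_subset_sdiff hS.1.1 le_rfl, by rw [card_sdiff_of_subset hS.2, hS.1.2]⟩
      · intro T hT
        simp only [mem_coe, mem_filter, mem_powersetCard, subset_sdiff] at hT ⊢
        refine ⟨⟨union_subset hT.1.1 hAU, ?_⟩, subset_union_right⟩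
        rw [card_union_of_disjoint hT.1.2, hT.2]
        omega
      · intro S hS
        exact sdiff_union_of_subset (mem_filter.1 hS).2
      · intro T hT
        exact union_sdiff_cancel_right (subset_sdiff.1 (mem_powersetCard.1 hT).1).2
    rw [hcount, Nat.choose_mul hAτ, mul_comm]
  · have hempty : ({S ∈ powersetCard τ U | A ⊆ S} : Finset _) = ∅ := by
      refine filter_false_of_mem fun S hS hAS => hAτ ?_
      exact (mem_powersetCard.1 hS).2 ▸ card_le_card hAS
    rw [hempty, Nat.choose_eq_zero_of_lt (not_le.1 hAτ)]
    simp

lemma card_filter_subset_powersetCard_div_choose {U A : Finset α} (hAU : A ⊆ U) {τ : ℕ}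
    (hτ : τ ≤ #U) :
    (#{S ∈ powersetCard τ U | A ⊆ S} : ℝ) / (#U).choose τ = τ.choose #A / (#U).choose #A := by
  rw [div_eq_div_iff (by positivity [Nat.choose_pos hτ])
    (by positivity [Nat.choose_pos (card_le_card hAU)])]
  exact_mod_cast (card_filter_subset_powersetCard_mul_choose hAU τ).trans (mul_comm _ _)

lemma sum_card_inter_mul_ite_mem {R : Type*} [CommSemiring R] (𝒮 : Finset (Finset α))
    (J : Finset α) (k : α) :
    ∑ S ∈ 𝒮, (#(J ∩ S) : R) * (if k ∈ S then 1 else 0) =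
      ∑ j ∈ J, (#{S ∈ 𝒮 | {j, k} ⊆ S} : R) := by
  simp_rw [← filter_mem_eq_inter, ← sum_boole, sum_mul, ite_mul, one_mul, zero_mul, ← ite_and]
  rw [sum_comm]
  simp only [sum_boole, insert_subset_iff, singleton_subset_iff]
end

section
variable {α : Type*} [Fintype α] [DecidableEq α]

lemma card_filter_pair_subset_powersetCard_univ_div_choose {τ : ℕ} (hτ : τ ≤ Fintype.card α)
    (j k : α) :
    (#{S ∈ powersetCard τ univ | {j, k} ⊆ S} : ℝ) / (Fintype.card α).choose τ =
      if j = k then (τ / Fintype.card α : ℝ)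
      else τ / Fintype.card α * ((τ - 1) / (Fintype.card α - 1)) := by
  rw [← card_univ, card_filter_subset_powersetCard_div_choose (subset_univ _) (by simpa using hτ)]
  split_ifs with hjk
  · simp [hjk]
  · rw [card_pair hjk, Nat.cast_choose_two, Nat.cast_choose_two,
      div_div_div_cancel_right₀ two_ne_zero, div_mul_div_comm]

lemma sum_card_inter_mul_ite_mem_div_choose_of_mem {τ : ℕ}
    (hτ : τ ≤ Fintype.card α) {J : Finset α} {k : α} (hk : k ∈ J) :
    (∑ S ∈ powersetCard τ univ, (#(J ∩ S) : ℝ) * (if k ∈ S then 1 else 0)) /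
        (Fintype.card α).choose τ =
      τ / Fintype.card α * (1 + (#J - 1) * ((τ - 1) / (Fintype.card α - 1))) := by
  rw [sum_card_inter_mul_ite_mem, sum_div]
  simp_rw [card_filter_pair_subset_powersetCard_univ_div_choose hτ]
  rw [sum_ite, filter_eq', filter_ne', if_pos hk, sum_singleton, sum_const, card_erase_of_mem hk,
    nsmul_eq_mul, Nat.cast_sub (card_pos.2 ⟨k, hk⟩)]
  ring

lemma sum_card_inter_mul_ite_mem_div_choose_of_notMem {τ : ℕ}
    (hτ : τ ≤ Fintype.card α) {J : Finset α} {k : α} (hk : k ∉ J) :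
    (∑ S ∈ powersetCard τ univ, (#(J ∩ S) : ℝ) * (if k ∈ S then 1 else 0)) /
        (Fintype.card α).choose τ =
      #J * (τ / Fintype.card α * ((τ - 1) / (Fintype.card α - 1))) := by
  rw [sum_card_inter_mul_ite_mem, sum_div]
  simp_rw [card_filter_pair_subset_powersetCard_univ_div_choose hτ]
  rw [sum_ite, filter_eq', filter_ne', if_neg hk, erase_eq_of_notMem hk, sum_empty, sum_const,
    nsmul_eq_mul, zero_add]
end

theorem stmt4_general (n τ : ℕ) (hτn : τ ≤ n)
    (J : Finset (Fin n)) (hJ : J.Nonempty) :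
    IsGreatest (Set.range fun k : Fin n =>
      (∑ S ∈ Finset.univ.filter (fun S : Finset (Fin n) => S.card = τ),
        ((J ∩ S).card : ℝ) * (if k ∈ S then (1 : ℝ) else 0)) / (n.choose τ : ℝ))
      (((τ : ℝ) / (n : ℝ)) *
        (1 + ((J.card : ℝ) - 1) * ((τ : ℝ) - 1) / ((n : ℝ) - 1))) := by
  obtain ⟨j, hj⟩ := hJ
  have hτ : τ ≤ Fintype.card (Fin n) := by simpa using hτn
  have hratio : ((τ : ℝ) - 1) / (n - 1) ≤ 1 := by
    have hn : (1 : ℝ) ≤ n := by exact_mod_cast Fin.pos_iff_nonempty.2 ⟨j⟩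
    exact div_le_one_of_le₀ (by gcongr) (by linarith)
  have hmem : ∀ k ∈ J,
      (∑ S ∈ powersetCard τ univ, (#(J ∩ S) : ℝ) * (if k ∈ S then 1 else 0)) / n.choose τ =
        τ / n * (1 + (#J - 1) * ((τ - 1) / (n - 1))) := fun k hk => by
    simpa using sum_card_inter_mul_ite_mem_div_choose_of_mem hτ hk
  simp only [univ_filter_card_eq, mul_div_assoc]
  refine ⟨⟨j, hmem j hj⟩, ?_⟩
  rintro _ ⟨k, rfl⟩
  by_cases hk : k ∈ J
  · exact (hmem k hk).le
  · have hpair := mul_le_mul_of_nonneg_left hratio (by positivity : (0 : ℝ) ≤ τ / n)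
    calc _ = #J * (τ / n * ((τ - 1) / (n - 1)) : ℝ) := by
          simpa using sum_card_inter_mul_ite_mem_div_choose_of_notMem hτ hk
      _ ≤ _ := by linarith

theorem stmt4 (n τ : ℕ) (hn : 2 ≤ n) (hτ1 : 1 ≤ τ) (hτn : τ ≤ n)
    (J : Finset (Fin n)) (hJ : J.Nonempty) :
    IsGreatest (Set.range fun k : Fin n =>
      (∑ S ∈ Finset.univ.filter (fun S : Finset (Fin n) => S.card = τ),
        ((J ∩ S).card : ℝ) * (if k ∈ S then (1 : ℝ) else 0)) / (n.choose τ : ℝ))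
      (((τ : ℝ) / (n : ℝ)) *
        (1 + ((J.card : ℝ) - 1) * ((τ : ℝ) - 1) / ((n : ℝ) - 1))) :=
  stmt4_general n τ hτn J hJ
end

section
/- Let $\hat{S}$ be a proper uniform sampling on $[n]$ and $\phi:\mathbb{R}^N\to\mathbb{R}$ be continuously differentiable. Fix $x\in\mathbb{R}^N$ and define $\hat{\phi}_x(h)=\mathbf{E}[\phi(x+h_{[\hat{S}]})]$. Then $\nabla\hat{\phi}_x(0)=\frac{\mathbf{E}[|\hat{S}|]}{n}\nabla\phi(x)$. -/
open Finset

/-!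
Differentiating under the finite expectation, the derivative at `0` is
`∑_S p_S • ∇φ(x) ∘ P_S`, where `P_S` keeps the coordinates whose block lies in `S`. By linearity
this is `∇φ(x) ∘ (∑_S p_S • P_S)`, and the averaged projection `∑_S p_S • P_S` is the scalar
`P(i ∈ Ŝ)` (the same for every block `i`) times the identity. Counting pairs `i ∈ S` gives
`∑_i P(i ∈ Ŝ) = E|Ŝ|`, so by uniformity `P(i ∈ Ŝ) = E|Ŝ| / n`.
-/

section InclusionProbability

variable {κ : Type*} [Fintype κ] [DecidableEq κ]

theorem sum_mul_card_eq_sum_sum_ite_mem (p : Finset κ → ℝ) :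
    ∑ S : Finset κ, p S * S.card = ∑ i : κ, ∑ S : Finset κ, if i ∈ S then p S else 0 := by
  rw [Finset.sum_comm]
  refine Finset.sum_congr rfl fun S _ => ?_
  rw [Finset.sum_ite_mem, Finset.univ_inter, Finset.sum_const, nsmul_eq_mul, mul_comm]

theorem sum_ite_mem_eq_div_card_of_uniform (p : Finset κ → ℝ)
    (hunif : ∀ i j : κ,
      (∑ S : Finset κ, if i ∈ S then p S else 0) = (∑ S : Finset κ, if j ∈ S then p S else 0))
    (i : κ) :
    (∑ S : Finset κ, if i ∈ S then p S else 0) =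
      (∑ S : Finset κ, p S * S.card) / Fintype.card κ := by
  have hcard : (Fintype.card κ : ℝ) ≠ 0 := Nat.cast_ne_zero.mpr (Fintype.card_pos_iff.mpr ⟨i⟩).ne'
  rw [sum_mul_card_eq_sum_sum_ite_mem, Finset.sum_congr rfl fun j _ => hunif j i,
    Finset.sum_const, Finset.card_univ, nsmul_eq_mul, mul_div_cancel_left₀ _ hcard]

end InclusionProbability

section BlockMask

variable {ι κ : Type*} [DecidableEq κ]

/-- The map `h ↦ h_[S]`, where coordinate `j` belongs to block `blk j`. -/
noncomputable def blockMask (blk : ι → κ) (S : Finset κ) : (ι → ℝ) →L[ℝ] (ι → ℝ) :=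
  ContinuousLinearMap.pi fun j => if blk j ∈ S then ContinuousLinearMap.proj j else 0

theorem blockMask_apply (blk : ι → κ) (S : Finset κ) (h : ι → ℝ) :
    blockMask blk S h = fun j => if blk j ∈ S then h j else 0 := by
  funext j
  by_cases hj : blk j ∈ S <;> simp [blockMask, hj]

theorem sum_smul_blockMask_of_uniform [Fintype κ] (blk : ι → κ) (p : Finset κ → ℝ)
    (hunif : ∀ i j : κ,
      (∑ S : Finset κ, if i ∈ S then p S else 0) = (∑ S : Finset κ, if j ∈ S then p S else 0)) :
    ∑ S : Finset κ, p S • blockMask blk S =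
      ((∑ S : Finset κ, p S * S.card) / Fintype.card κ) • ContinuousLinearMap.id ℝ (ι → ℝ) := by
  ext h j
  simp only [FunLike.coe_sum, Finset.sum_apply, FunLike.coe_smul,
    Pi.smul_apply, blockMask_apply, smul_eq_mul, ContinuousLinearMap.coe_id', id_eq]
  rw [← sum_ite_mem_eq_div_card_of_uniform p hunif (blk j), Finset.sum_mul]
  refine Finset.sum_congr rfl fun S _ => ?_
  split_ifs <;> simp

end BlockMask

theorem hasFDerivAt_sum_mul_comp_add {E F : Type*} [NormedAddCommGroup E] [NormedSpace ℝ E]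
    [NormedAddCommGroup F] [NormedSpace ℝ F] {ι : Type*} (s : Finset ι) (p : ι → ℝ)
    (M : ι → E →L[ℝ] F) {φ : F → ℝ} {f : F →L[ℝ] ℝ} {x : F} (hφ : HasFDerivAt φ f x) :
    HasFDerivAt (fun h => ∑ i ∈ s, p i * φ (x + M i h)) (∑ i ∈ s, p i • f.comp (M i)) 0 := by
  refine HasFDerivAt.fun_sum fun i _ => HasFDerivAt.const_mul ?_ (p i)
  have hφ' : HasFDerivAt φ f (x + M i 0) := by simpa using hφ
  exact hφ'.comp 0 ((M i).hasFDerivAt.const_add x)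

theorem stmt13_general (N n : ℕ) (blk : Fin N → Fin n)
    (p : Finset (Fin n) → ℝ)
    (hunif : ∀ i j : Fin n,
      (∑ S : Finset (Fin n), if i ∈ S then p S else 0) =
      (∑ S : Finset (Fin n), if j ∈ S then p S else 0))
    (φ : (Fin N → ℝ) → ℝ) (hφ : ContDiff ℝ 1 φ)
    (x : Fin N → ℝ) :
    fderiv ℝ (fun h : Fin N → ℝ =>
      ∑ S : Finset (Fin n), p S * φ (x + fun j => if blk j ∈ S then h j else 0)) 0 =
    ((∑ S : Finset (Fin n), p S * S.card) / n) • fderiv ℝ φ x := by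
  have hφx : HasFDerivAt φ (fderiv ℝ φ x) x :=
    (hφ.differentiable one_ne_zero x).hasFDerivAt
  simp only [← blockMask_apply]
  rw [(hasFDerivAt_sum_mul_comp_add univ p (blockMask blk) hφx).fderiv]
  simp_rw [← ContinuousLinearMap.comp_smul, ← ContinuousLinearMap.comp_finsetSum,
    sum_smul_blockMask_of_uniform blk p hunif, Fintype.card_fin, ContinuousLinearMap.comp_smul,
    ContinuousLinearMap.comp_id]

theorem stmt13 (N n : ℕ) (hn : 0 < n) (blk : Fin N → Fin n)
    (p : Finset (Fin n) → ℝ) (hp : ∀ S, 0 ≤ p S)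
    (hsum : ∑ S : Finset (Fin n), p S = 1)
    (hunif : ∀ i j : Fin n,
      (∑ S : Finset (Fin n), if i ∈ S then p S else 0) =
      (∑ S : Finset (Fin n), if j ∈ S then p S else 0))
    (hproper : 0 < ∑ S ∈ Finset.univ.filter (fun S : Finset (Fin n) => S.Nonempty), p S)
    (φ : (Fin N → ℝ) → ℝ) (hφ : ContDiff ℝ 1 φ)
    (x : Fin N → ℝ) :
    fderiv ℝ (fun h : Fin N → ℝ =>
      ∑ S : Finset (Fin n), p S * φ (x + fun j => if blk j ∈ S then h j else 0)) 0 =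
    ((∑ S : Finset (Fin n), p S * S.card) / n) • fderiv ℝ φ x :=
  stmt13_general N n blk p hunif φ hφ x
end

section
/- Let $A\in\mathbb{R}^{m\times n}$ (all blocks of size one, $B_i=1$), let $p=2$, $v_j>0$ for all $j$, so $\|z\|_v^2=\sum_j v_j^2 z_j^2$ and $(\|z\|_v^*)^2=\sum_j v_j^{-2}z_j^2$ on $\mathbb{R}^m$. Define $w_i^*=\sum_{j=1}^m v_j^{-2}A_{ji}^2$ (assumed positive for all $i$). Then for every nonempty $S\subseteq[n]$, $\max\left\{\sum_{j=1}^m v_j^{-2}\left(\sum_{i\in S}A_{ji}h_i\right)^2 : \sum_{i\in S}w_i^* h_i^2 = 1\right\} \le \max_{1\le j\le m}|\{i\in S: A_{ji}\ne 0\}|$. -/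
/-!
Each row of `A` has at most `K` nonzero entries in `S`, so Cauchy–Schwarz applied row by row,
over the support only, costs a factor `K`; exchanging the two sums then turns the right-hand side
into `K * ∑ i ∈ S, w i * h i ^ 2 = K`.
-/

open Finset

section

variable {ι κ α : Type*} [CommSemiring α] [LinearOrder α] [IsStrictOrderedRing α]
  [ExistsAddOfLE α]

theorem sq_sum_le_card_filter_mul_sum_sq {s : Finset ι} {p : ι → Prop} [DecidablePred p]
    {f : ι → α} (hf : ∀ i ∈ s, f i ≠ 0 → p i) :
    (∑ i ∈ s, f i) ^ 2 ≤ #{i ∈ s | p i} * ∑ i ∈ s, f i ^ 2 := by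
  rw [← sum_filter_of_ne hf]
  calc (∑ i ∈ s with p i, f i) ^ 2 ≤ #{i ∈ s | p i} * ∑ i ∈ s with p i, f i ^ 2 :=
        sq_sum_le_card_mul_sum_sq
    _ ≤ #{i ∈ s | p i} * ∑ i ∈ s, f i ^ 2 := by
        gcongr
        · exact fun i _ _ ↦ sq_nonneg (f i)
        · exact filter_subset p s

theorem sq_sum_mul_le_card_support_mul_sum_sq [DecidableEq α] (s : Finset ι) (a b : ι → α) :
    (∑ i ∈ s, a i * b i) ^ 2 ≤ #{i ∈ s | a i ≠ 0} * ∑ i ∈ s, a i ^ 2 * b i ^ 2 := by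
  simp only [← mul_pow]
  exact sq_sum_le_card_filter_mul_sum_sq fun i _ hab ↦ left_ne_zero_of_mul hab

theorem sum_mul_sq_row_sum_le_sup_card_support_mul [Fintype κ] [DecidableEq α] (A : Matrix κ ι α)
    {c : κ → α} (hc : ∀ j, 0 ≤ c j) (S : Finset ι) (h : ι → α) :
    ∑ j, c j * (∑ i ∈ S, A j i * h i) ^ 2 ≤
      ((univ.sup fun j ↦ #{i ∈ S | A j i ≠ 0} : ℕ) : α) *
        ∑ i ∈ S, (∑ j, c j * A j i ^ 2) * h i ^ 2 := by
  set K : ℕ := univ.sup fun j ↦ #{i ∈ S | A j i ≠ 0}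
  have row_bound (j : κ) :
      (∑ i ∈ S, A j i * h i) ^ 2 ≤ K * ∑ i ∈ S, A j i ^ 2 * h i ^ 2 := by
    refine (sq_sum_mul_le_card_support_mul_sum_sq S (A j) h).trans ?_
    gcongr
    · exact sum_nonneg fun _ _ ↦ mul_nonneg (sq_nonneg _) (sq_nonneg _)
    · exact le_sup (f := fun j ↦ #{i ∈ S | A j i ≠ 0}) (mem_univ j)
  calc ∑ j, c j * (∑ i ∈ S, A j i * h i) ^ 2
      ≤ ∑ j, c j * (K * ∑ i ∈ S, A j i ^ 2 * h i ^ 2) :=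
        sum_le_sum fun j _ ↦ mul_le_mul_of_nonneg_left (row_bound j) (hc j)
    _ = K * ∑ i ∈ S, (∑ j, c j * A j i ^ 2) * h i ^ 2 := by
        simp only [mul_sum, sum_mul]
        rw [sum_comm]
        exact sum_congr rfl fun _ _ ↦ sum_congr rfl fun _ _ ↦ by ring

end

open Classical in
theorem stmt18_general (m n : ℕ) (A : Matrix (Fin m) (Fin n) ℝ)
    (v : Fin m → ℝ)
    (w : Fin n → ℝ) (hw : ∀ i, w i = ∑ j, (v j)⁻¹ ^ 2 * (A j i) ^ 2)
    (S : Finset (Fin n))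
    (h : Fin n → ℝ) (hh : ∑ i ∈ S, w i * (h i) ^ 2 = 1) :
    (∑ j, (v j)⁻¹ ^ 2 * (∑ i ∈ S, A j i * h i) ^ 2) ≤
      ((Finset.univ.sup fun j : Fin m =>
        (S.filter fun i => A j i ≠ 0).card : ℕ) : ℝ) := by
  have hw_sum : ∑ i ∈ S, (∑ j, (v j)⁻¹ ^ 2 * A j i ^ 2) * h i ^ 2 = 1 := by
    simpa only [hw] using hh
  simpa only [hw_sum, mul_one] using
    sum_mul_sq_row_sum_le_sup_card_support_mul A (fun j ↦ sq_nonneg (v j)⁻¹) S h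

open Classical in
theorem stmt18 (m n : ℕ) (A : Matrix (Fin m) (Fin n) ℝ)
    (v : Fin m → ℝ) (hv : ∀ j, 0 < v j)
    (w : Fin n → ℝ) (hw : ∀ i, w i = ∑ j, (v j)⁻¹ ^ 2 * (A j i) ^ 2)
    (hwpos : ∀ i, 0 < w i)
    (S : Finset (Fin n)) (hS : S.Nonempty)
    (h : Fin n → ℝ) (hh : ∑ i ∈ S, w i * (h i) ^ 2 = 1) :
    (∑ j, (v j)⁻¹ ^ 2 * (∑ i ∈ S, A j i * h i) ^ 2) ≤
      ((Finset.univ.sup fun j : Fin m =>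
        (S.filter fun i => A j i ≠ 0).card : ℕ) : ℝ) :=
  stmt18_general m n A v w hw S h hh
end
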